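/- arXiv:1406.1233 — 6 statements merged into one kernel-verified Lean document; each statement's English description precedes it below -/
import Mathlib

section
/- Let σ, τ, b ∈ ℂ with Im τ ≠ 0. Let L be the additive subgroup of ℂ² generated by (1,0), (σ,0), (0,1), (b,τ), let Λ_σ be the additive subgroup of ℂ generated by 1 and σ, and let Λ_τ be the additive subgroup of ℂ generated by 1 and τ. Then L equals the product subgroup Λ_σ × Λ_τ of ℂ² if and only if b ∈ Λ_σ (i.e. b ≡ 0 modulo 1 and σ). -/
theorem stmt5 (σ τ b : ℂ) (hτ : τ.im ≠ 0) :
    AddSubgroup.closure {((1 : ℂ), (0 : ℂ)), (σ, 0), (0, 1), (b, τ)} =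
      (AddSubgroup.closure ({1, σ} : Set ℂ)).prod (AddSubgroup.closure ({1, τ} : Set ℂ)) ↔
    b ∈ AddSubgroup.closure ({1, σ} : Set ℂ) := by
  set L := AddSubgroup.closure {((1 : ℂ), (0 : ℂ)), (σ, 0), (0, 1), (b, τ)} with hL
  set Λσ := AddSubgroup.closure ({1, σ} : Set ℂ)
  set Λτ := AddSubgroup.closure ({1, τ} : Set ℂ)
  constructor
  · intro h
    have hmem : ((b, τ) : ℂ × ℂ) ∈ L := AddSubgroup.subset_closure (by simp)
    rw [h] at hmem
    exact hmem.1
  · intro hb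
    -- generators of L as elements of L
    have g1 : ((1, 0) : ℂ × ℂ) ∈ L := AddSubgroup.subset_closure (by simp)
    have g2 : ((σ, 0) : ℂ × ℂ) ∈ L := AddSubgroup.subset_closure (by simp)
    have g3 : ((0, 1) : ℂ × ℂ) ∈ L := AddSubgroup.subset_closure (by simp)
    have g4 : ((b, τ) : ℂ × ℂ) ∈ L := AddSubgroup.subset_closure (by simp)
    have hσmap : ∀ x ∈ Λσ, ((x, 0) : ℂ × ℂ) ∈ L := by
      intro x hx
      have hle : AddSubgroup.map (AddMonoidHom.inl ℂ ℂ) Λσ ≤ L := by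
        rw [AddSubgroup.map_le_iff_le_comap, AddSubgroup.closure_le]
        rintro z (rfl | rfl)
        · exact g1
        · exact g2
      exact hle ⟨x, hx, rfl⟩
    have hb0 : ((b, 0) : ℂ × ℂ) ∈ L := hσmap b hb
    have g0τ : ((0, τ) : ℂ × ℂ) ∈ L := by
      have := AddSubgroup.sub_mem L g4 hb0
      simpa using this
    have hτmap : ∀ y ∈ Λτ, ((0, y) : ℂ × ℂ) ∈ L := by
      intro y hy
      have hle : AddSubgroup.map (AddMonoidHom.inr ℂ ℂ) Λτ ≤ L := by
        rw [AddSubgroup.map_le_iff_le_comap, AddSubgroup.closure_le]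
        rintro z (rfl | rfl)
        · exact g3
        · exact g0τ
      exact hle ⟨y, hy, rfl⟩
    apply le_antisymm
    · rw [AddSubgroup.closure_le]
      rintro z (rfl | rfl | rfl | rfl)
      · exact ⟨AddSubgroup.subset_closure (by simp), AddSubgroup.zero_mem _⟩
      · exact ⟨AddSubgroup.subset_closure (by simp), AddSubgroup.zero_mem _⟩
      · exact ⟨AddSubgroup.zero_mem _, AddSubgroup.subset_closure (by simp)⟩
      · exact ⟨hb, AddSubgroup.subset_closure (by simp)⟩
    · rintro ⟨x, y⟩ ⟨hx, hy⟩
      have : ((x, y) : ℂ × ℂ) = (x, 0) + (0, y) := by simp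
      rw [this]
      exact AddSubgroup.add_mem L (hσmap x hx) (hτmap y hy)
end

section
/- Let ζ = (1+√3·i)/2 ∈ ℂ and b ∈ ℂ. Let L_b be the additive subgroup of ℂ² generated by (1,0), (ζ,0), (0,1), (b,ζ), and let φ : ℂ² → ℂ² be the ℂ-linear map φ(z,w) = (ζ²·z, ζ⁻²·w). Then φ maps L_b into L_b if and only if b ∈ Λ, where Λ is the additive subgroup of ℂ generated by 1 and ζ. (Hence the order-3 group generated by diag(ζ²,ζ⁻²) acts on the torus ℂ²/L_b only when ℂ²/L_b ≅ E × E for E = ℂ/Λ.) -/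
/-!
Since ζ² = ζ - 1, the map φ is (z, w) ↦ ((ζ - 1) z, -ζ w). Because ζ ∉ ℝ, the second coordinate
of k (0, 1) + l (b, ζ) vanishes only for k = l = 0, so (x, 0) ∈ L_b exactly when x ∈ Λ. The images
of (1, 0) and (ζ, 0) lie in Λ × 0, the image (0, -ζ) of (0, 1) is (b, 0) - (b, ζ), and the image of
(b, ζ) is (ζ b, 0) - (b, ζ) + (0, 1). Hence φ L_b ⊆ L_b if and only if b ∈ Λ and ζ b ∈ Λ, and the
second condition follows from the first since ζ Λ ⊆ Λ.
-/

theorem AddSubgroup.forall_mem_closure_map_mem_iff {G F : Type*} [AddGroup G] [FunLike F G G]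
    [AddMonoidHomClass F G G] (f : F) (S : Set G) :
    (∀ x ∈ closure S, f x ∈ closure S) ↔ ∀ s ∈ S, f s ∈ closure S :=
  closure_le ((closure S).comap (f : G →+ G))

theorem one_add_sqrt_three_mul_I_div_two_sq :
    ((1 + (Real.sqrt 3 : ℂ) * Complex.I) / 2) ^ 2 =
      (1 + (Real.sqrt 3 : ℂ) * Complex.I) / 2 - 1 := by
  have h3 : (Real.sqrt 3 : ℂ) ^ 2 = 3 := by
    exact_mod_cast Real.sq_sqrt (by norm_num : (0 : ℝ) ≤ 3)
  linear_combination ((Real.sqrt 3 : ℂ) ^ 2 / 4) * Complex.I_sq - (1 / 4) * h3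

def twistedLattice (ζ b : ℂ) : AddSubgroup (ℂ × ℂ) :=
  AddSubgroup.closure {(1, 0), (ζ, 0), (0, 1), (b, ζ)}

variable {ζ : ℂ}

theorem Complex.im_ne_zero_of_sq_eq_sub_one (hζ : ζ ^ 2 = ζ - 1) : ζ.im ≠ 0 := by
  intro him
  have hre := congrArg Complex.re hζ
  simp only [sq, mul_re, him, mul_zero, sub_zero, sub_re, one_re] at hre
  nlinarith [sq_nonneg (ζ.re - 1 / 2)]

theorem mem_closure_one_pair_iff {x : ℂ} :
    x ∈ AddSubgroup.closure ({1, ζ} : Set ℂ) ↔ ∃ n m : ℤ, n + m * ζ = x := by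
  simp [AddSubgroup.mem_closure_pair, zsmul_eq_mul]

theorem mul_mem_closure_one_pair (hζ : ζ ^ 2 = ζ - 1) {x : ℂ}
    (hx : x ∈ AddSubgroup.closure ({1, ζ} : Set ℂ)) :
    ζ * x ∈ AddSubgroup.closure ({1, ζ} : Set ℂ) := by
  obtain ⟨n, m, rfl⟩ := mem_closure_one_pair_iff.1 hx
  exact mem_closure_one_pair_iff.2 ⟨-m, n + m, by push_cast; linear_combination (-m) * hζ⟩

theorem mem_twistedLattice_iff {b : ℂ} {p : ℂ × ℂ} :
    p ∈ twistedLattice ζ b ↔ ∃ n m k l : ℤ, (n + m * ζ + l * b, k + l * ζ) = p := by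
  have hsplit : ({(1, 0), (ζ, 0), (0, 1), (b, ζ)} : Set (ℂ × ℂ)) =
      {(1, 0), (ζ, 0)} ∪ {(0, 1), (b, ζ)} := by
    rw [Set.insert_union, Set.singleton_union]
  rw [twistedLattice, hsplit, AddSubgroup.closure_union, AddSubgroup.mem_sup]
  simp [AddSubgroup.mem_closure_pair, Prod.ext_iff]

theorem mk_zero_mem_twistedLattice_iff (hζ : ζ.im ≠ 0) {b x : ℂ} :
    (x, 0) ∈ twistedLattice ζ b ↔ x ∈ AddSubgroup.closure ({1, ζ} : Set ℂ) := by
  simp only [mem_twistedLattice_iff, mem_closure_one_pair_iff, Prod.ext_iff]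
  constructor
  · rintro ⟨n, m, k, l, hx, hkl⟩
    obtain rfl : l = 0 := by exact_mod_cast (by simpa [hζ] using congrArg Complex.im hkl)
    exact ⟨n, m, by simpa using hx⟩
  · rintro ⟨n, m, rfl⟩
    exact ⟨n, m, 0, 0, by simp⟩

theorem forall_mem_twistedLattice_map_mem_iff (hζ : ζ ^ 2 = ζ - 1) {b : ℂ}
    (f : ℂ × ℂ →+ ℂ × ℂ) (hf : ∀ z w, f (z, w) = ((ζ - 1) * z, -ζ * w)) :
    (∀ x ∈ twistedLattice ζ b, f x ∈ twistedLattice ζ b) ↔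
      b ∈ AddSubgroup.closure ({1, ζ} : Set ℂ) := by
  have hbζ : (b, ζ) ∈ twistedLattice ζ b := AddSubgroup.subset_closure (by simp)
  have h01 : ((0 : ℂ), (1 : ℂ)) ∈ twistedLattice ζ b := AddSubgroup.subset_closure (by simp)
  have hf01 : f (0, 1) ∈ twistedLattice ζ b ↔ (b, 0) ∈ twistedLattice ζ b := by
    rw [hf, ← AddSubgroup.add_mem_cancel_right _ hbζ, Prod.mk_add_mk]
    simp
  have hfbζ : f (b, ζ) ∈ twistedLattice ζ b ↔ (ζ * b, 0) ∈ twistedLattice ζ b := by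
    have hsum : ((ζ - 1) * b, -ζ * ζ) + ((b, ζ) - (0, 1)) = (ζ * b, 0) := by
      simp only [Prod.mk_sub_mk, Prod.mk_add_mk, Prod.mk.injEq]
      exact ⟨by ring, by linear_combination -hζ⟩
    rw [hf, ← AddSubgroup.add_mem_cancel_right _ (AddSubgroup.sub_mem _ hbζ h01), hsum]
  have hgen : (∀ x ∈ twistedLattice ζ b, f x ∈ twistedLattice ζ b) ↔
      f (1, 0) ∈ twistedLattice ζ b ∧ f (ζ, 0) ∈ twistedLattice ζ b ∧
        f (0, 1) ∈ twistedLattice ζ b ∧ f (b, ζ) ∈ twistedLattice ζ b :=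
    (AddSubgroup.forall_mem_closure_map_mem_iff f _).trans (by simp [twistedLattice])
  have hsub : ζ - 1 ∈ AddSubgroup.closure ({1, ζ} : Set ℂ) :=
    mem_closure_one_pair_iff.2 ⟨-1, 1, by push_cast; ring⟩
  rw [hgen, hf01, hfbζ, hf, hf]
  simp only [mul_one, mul_zero,
    mk_zero_mem_twistedLattice_iff (Complex.im_ne_zero_of_sq_eq_sub_one hζ)]
  exact ⟨fun h ↦ h.2.2.1, fun hb ↦
    ⟨hsub, mul_comm ζ _ ▸ mul_mem_closure_one_pair hζ hsub, hb, mul_mem_closure_one_pair hζ hb⟩⟩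

theorem stmt6 (ζ : ℂ) (hζ : ζ = (1 + (Real.sqrt 3 : ℂ) * Complex.I) / 2) (b : ℂ)
    (φ : (ℂ × ℂ) →ₗ[ℂ] (ℂ × ℂ))
    (hφ : ∀ p : ℂ × ℂ, φ p = (ζ ^ 2 * p.1, ζ ^ (-2 : ℤ) * p.2)) :
    (∀ x ∈ AddSubgroup.closure {((1 : ℂ), (0 : ℂ)), (ζ, 0), (0, 1), (b, ζ)},
        φ x ∈ AddSubgroup.closure {((1 : ℂ), (0 : ℂ)), (ζ, 0), (0, 1), (b, ζ)}) ↔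
      b ∈ AddSubgroup.closure ({1, ζ} : Set ℂ) := by
  have hsq : ζ ^ 2 = ζ - 1 := hζ ▸ one_add_sqrt_three_mul_I_div_two_sq
  have hinv : ζ ^ (-2 : ℤ) = -ζ := by
    rw [zpow_neg, zpow_two, ← sq, hsq]
    exact inv_eq_of_mul_eq_one_right (by linear_combination -hsq)
  exact forall_mem_twistedLattice_map_mem_iff hsq φ.toAddMonoidHom fun z w ↦ by
    simp [hφ, hsq, hinv]
end

section
/- Let Λ = ℤ + ℤi ⊆ ℂ and E = ℂ/Λ, with m, m' the additive endomorphisms of E induced by multiplication by i and −i respectively. Then the set of points (x,y) ∈ E × E with x + x = 0 and y + y = 0 but not (m(x) = x and m'(y) = y) has exactly 12 elements. (These are the twelve points of E × E whose isotropy subgroup under the order-4 group generated by diag(i,−i) is exactly ⟨±I⟩.) -/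
/-!
The 2-torsion of `ℂ / ℤ[i]` consists of the four half-periods `(a + b i) / 2` with
`a, b ∈ {0, 1}`. Multiplication by `±i` swaps `a` and `b`, so its only 2-torsion fixed points are
`0` and `(1 + i) / 2`. Of the `16` pairs of 2-torsion points, `4` are fixed in both coordinates,
leaving `12`.
-/

open Complex QuotientAddGroup

noncomputable abbrev gaussianLattice : AddSubgroup ℂ := AddSubgroup.closure {1, I}

lemma mem_gaussianLattice_iff {z : ℂ} :
    z ∈ gaussianLattice ↔ ∃ a b : ℤ, (a : ℂ) + b * I = z := by
  simp only [AddSubgroup.mem_closure_pair, zsmul_eq_mul, mul_one]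

lemma ZMod.eq_of_val_sub_val_eq_two_mul {x y : ZMod 2} {a : ℤ}
    (h : (y.val : ℤ) - x.val = 2 * a) : x = y := by
  have := x.val_lt
  have := y.val_lt
  exact ZMod.val_injective _ (by omega)

noncomputable def halfPoint (v : ZMod 2 × ZMod 2) : ℂ ⧸ gaussianLattice :=
  mk ((v.1.val + v.2.val * I) / 2)

lemma halfPoint_injective : Function.Injective halfPoint := by
  intro v w h
  obtain ⟨a, b, hab⟩ := mem_gaussianLattice_iff.mp (QuotientAddGroup.eq.mp h)
  have hre := congrArg (fun z : ℂ => 2 * z.re) hab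
  have him := congrArg (fun z : ℂ => 2 * z.im) hab
  simp only [add_re, intCast_re, mul_re, I_re, mul_zero, intCast_im, I_im, mul_one, sub_self,
    add_zero, neg_re, div_ofNat_re, natCast_re, natCast_im, add_im, mul_im, zero_add, neg_im,
    div_ofNat_im] at hre him
  have h₁ : (w.1.val : ℤ) - v.1.val = 2 * a := by
    exact_mod_cast (by linarith : (w.1.val : ℝ) - v.1.val = 2 * a)
  have h₂ : (w.2.val : ℤ) - v.2.val = 2 * b := by
    exact_mod_cast (by linarith : (w.2.val : ℝ) - v.2.val = 2 * b)
  exact Prod.ext (ZMod.eq_of_val_sub_val_eq_two_mul h₁) (ZMod.eq_of_val_sub_val_eq_two_mul h₂)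

lemma halfPoint_add_self (v : ZMod 2 × ZMod 2) : halfPoint v + halfPoint v = 0 := by
  rw [halfPoint, ← mk_add, eq_zero_iff, mem_gaussianLattice_iff]
  exact ⟨v.1.val, v.2.val, by push_cast; ring⟩

lemma range_halfPoint : Set.range halfPoint = {x | x + x = 0} := by
  ext x
  refine ⟨by rintro ⟨v, rfl⟩; exact halfPoint_add_self v, fun hx => ?_⟩
  induction x using QuotientAddGroup.induction_on with | H z => ?_
  obtain ⟨a, b, hab⟩ := mem_gaussianLattice_iff.mp ((eq_zero_iff (z + z)).mp hx)
  refine ⟨(a, b), QuotientAddGroup.eq.mpr (mem_gaussianLattice_iff.mpr ⟨a / 2, b / 2, ?_⟩)⟩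
  have ha : (((a : ZMod 2).val : ℤ) : ℂ) + 2 * (a / 2 : ℤ) = a := by
    rw [ZMod.val_intCast]; exact_mod_cast Int.emod_add_mul_ediv a 2
  have hb : (((b : ZMod 2).val : ℤ) : ℂ) + 2 * (b / 2 : ℤ) = b := by
    rw [ZMod.val_intCast]; exact_mod_cast Int.emod_add_mul_ediv b 2
  push_cast at ha hb ⊢
  linear_combination (ha + hb * I + hab) / 2

lemma map_halfPoint_of_mul_I {m : ℂ ⧸ gaussianLattice →+ ℂ ⧸ gaussianLattice}
    (hm : ∀ z : ℂ, m (mk z) = mk (I * z)) (v : ZMod 2 × ZMod 2) :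
    m (halfPoint v) = halfPoint v.swap := by
  rw [halfPoint, hm, halfPoint, QuotientAddGroup.eq, mem_gaussianLattice_iff]
  refine ⟨v.2.val, 0, ?_⟩
  simp only [Prod.fst_swap, Prod.snd_swap]
  push_cast
  linear_combination ((v.2.val : ℂ) / 2) * I_sq

lemma map_halfPoint_of_mul_neg_I {m : ℂ ⧸ gaussianLattice →+ ℂ ⧸ gaussianLattice}
    (hm : ∀ z : ℂ, m (mk z) = mk (-I * z)) (v : ZMod 2 × ZMod 2) :
    m (halfPoint v) = halfPoint v.swap := by
  rw [halfPoint, hm, halfPoint, QuotientAddGroup.eq, mem_gaussianLattice_iff]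
  refine ⟨0, v.1.val, ?_⟩
  simp only [Prod.fst_swap, Prod.snd_swap]
  push_cast
  linear_combination (-(v.2.val : ℂ) / 2) * I_sq

theorem stmt10
    (m m' : (ℂ ⧸ AddSubgroup.closure ({1, Complex.I} : Set ℂ)) →+
            (ℂ ⧸ AddSubgroup.closure ({1, Complex.I} : Set ℂ)))
    (hm : ∀ z : ℂ, m (QuotientAddGroup.mk z) = QuotientAddGroup.mk (Complex.I * z))
    (hm' : ∀ z : ℂ, m' (QuotientAddGroup.mk z) = QuotientAddGroup.mk (-Complex.I * z)) :
    Nat.card {p : (ℂ ⧸ AddSubgroup.closure ({1, Complex.I} : Set ℂ)) ×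
        (ℂ ⧸ AddSubgroup.closure ({1, Complex.I} : Set ℂ)) //
        (p.1 + p.1 = 0 ∧ p.2 + p.2 = 0) ∧ ¬(m p.1 = p.1 ∧ m' p.2 = p.2)} = 12 := by
  have fixed_iff : ∀ v, m (halfPoint v) = halfPoint v ↔ v.swap = v := fun v => by
    rw [map_halfPoint_of_mul_I hm, halfPoint_injective.eq_iff]
  have fixed_iff' : ∀ v, m' (halfPoint v) = halfPoint v ↔ v.swap = v := fun v => by
    rw [map_halfPoint_of_mul_neg_I hm', halfPoint_injective.eq_iff]
  have hS : {p : (ℂ ⧸ gaussianLattice) × (ℂ ⧸ gaussianLattice) |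
        (p.1 + p.1 = 0 ∧ p.2 + p.2 = 0) ∧ ¬(m p.1 = p.1 ∧ m' p.2 = p.2)} =
      Prod.map halfPoint halfPoint '' {w | ¬(w.1.swap = w.1 ∧ w.2.swap = w.2)} := by
    ext ⟨x, y⟩
    constructor
    · rintro ⟨⟨hx, hy⟩, hfix⟩
      obtain ⟨v, rfl⟩ : x ∈ Set.range halfPoint := range_halfPoint ▸ hx
      obtain ⟨u, rfl⟩ : y ∈ Set.range halfPoint := range_halfPoint ▸ hy
      exact ⟨(v, u), by rwa [fixed_iff, fixed_iff'] at hfix, rfl⟩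
    · rintro ⟨⟨v, u⟩, hvu, ⟨⟩⟩
      exact ⟨⟨halfPoint_add_self v, halfPoint_add_self u⟩, by rwa [fixed_iff, fixed_iff']⟩
  change Nat.card ↥{p | _} = 12
  rw [hS, Nat.card_image_of_injective (halfPoint_injective.prodMap halfPoint_injective),
    Nat.card_eq_fintype_card]
  decide
end

section
/- Let n ≥ 2, and let q, q' ∈ E be the classes of 1/4 and 3/4 respectively. Then for every choice of (x_3, y_3, …, x_n, y_n) ∈ (E×E)^{n−2}, the point (q, 0, q', 0, x_3, y_3, …, x_n, y_n) is a fixed point of the composite γ_1 ∘ γ_2 : (E×E)^n → (E×E)^n. (These fixed points give singularities of (E×E)^n/Γ locally of the form (ℂ⁴/±1) × ℂ^{2n−4}, which obstruct a symplectic desingularization.) -/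
/-- The elliptic curve `E = ℂ / (ℤ + ℤτ)` as a quotient additive group. -/
abbrev EllCurve (τ : ℂ) : Type := ℂ ⧸ AddSubgroup.closure ({1, τ} : Set ℂ)

theorem stmt15 (τ : ℂ) (hτ : τ.im ≠ 0) (n : ℕ) (hn : 2 ≤ n)
    (t : EllCurve τ) (ht : t = QuotientAddGroup.mk (1 / 2 : ℂ))
    (γ : Fin n → (Fin n → EllCurve τ × EllCurve τ) → (Fin n → EllCurve τ × EllCurve τ))
    (hγ : ∀ i v j, γ i v j =
      if j = i then (-(v i).1, -(v i).2) else ((v j).1 + t, (v j).2))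
    (q q' : EllCurve τ)
    (hq : q = QuotientAddGroup.mk (1 / 4 : ℂ))
    (hq' : q' = QuotientAddGroup.mk (3 / 4 : ℂ)) :
    ∀ r : Fin n → EllCurve τ × EllCurve τ,
      (γ ⟨0, by omega⟩ ∘ γ ⟨1, by omega⟩)
          (fun j => if j = ⟨0, by omega⟩ then (q, 0)
            else if j = ⟨1, by omega⟩ then (q', 0) else r j) =
        (fun j => if j = ⟨0, by omega⟩ then (q, 0)
          else if j = ⟨1, by omega⟩ then (q', 0) else r j) := by
  intro r
  have hone : (QuotientAddGroup.mk (1 : ℂ) : EllCurve τ) = 0 :=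
    (QuotientAddGroup.eq_zero_iff _).2 (AddSubgroup.subset_closure (by simp))
  have key : ∀ a b : ℂ, a - b = 1 →
      (QuotientAddGroup.mk a : EllCurve τ) = QuotientAddGroup.mk b := by
    intro a b hab
    rw [QuotientAddGroup.eq_iff_sub_mem]
    exact hab ▸ AddSubgroup.subset_closure (by simp)
  have htt : t + t = 0 := by
    rw [ht, ← QuotientAddGroup.mk_add, show (1/2 + 1/2 : ℂ) = 1 by norm_num, hone]
  have h1 : -(q + t) = q := by
    rw [ht, hq, ← QuotientAddGroup.mk_add, ← QuotientAddGroup.mk_neg]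
    exact (key _ _ (by norm_num)).symm
  have h2 : -q' + t = q' := by
    rw [ht, hq', ← QuotientAddGroup.mk_neg, ← QuotientAddGroup.mk_add]
    apply (key _ _ (by norm_num)).symm
  funext j
  have h01 : (⟨0, by omega⟩ : Fin n) ≠ ⟨1, by omega⟩ := by
    simp [Fin.ext_iff]
  simp only [Function.comp_apply, hγ]
  by_cases hj0 : j = ⟨0, by omega⟩
  · subst hj0
    simp [h01, h1]
  · by_cases hj1 : j = ⟨1, by omega⟩
    · subst hj1
      simp [h01.symm, hj0, h2]
    · simp [hj0, hj1, h01.symm, add_assoc, htt]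
end

section
/- Let n ≥ 1 and let B be an alternating ℂ-bilinear form on V = (ℂ×ℂ)^n such that B(T_{a,σ} v, T_{a,σ} w) = B(v, w) for every a : Fin n → ℂˣ taking values in {1, −1}, every permutation σ of Fin n, and all v, w ∈ V. Then there exists c ∈ ℂ with B = c·ω; in particular the space of such invariant alternating forms is one-dimensional. (This computes h^{2,0}(E^{2n}/Γ) = 1 for Γ = (ℤ/2ℤ)^n ⋊ S_n, showing E^{2n}/Γ is a primitively symplectic V-manifold.) -/
open scoped BigOperators

/-- The linear map `T_{a,σ}` on `(ℂ×ℂ)ⁿ`: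
`(T_{a,σ} v)_i = (a(σ⁻¹ i)·(v(σ⁻¹ i))₁, a(σ⁻¹ i)⁻¹·(v(σ⁻¹ i))₂)`. -/
def Tmap {n : ℕ} (a : Fin n → ℂˣ) (σ : Equiv.Perm (Fin n))
    (v : Fin n → ℂ × ℂ) : Fin n → ℂ × ℂ :=
  fun i => ((a (σ⁻¹ i) : ℂ) * (v (σ⁻¹ i)).1, (((a (σ⁻¹ i))⁻¹ : ℂˣ) : ℂ) * (v (σ⁻¹ i)).2)

/-- The standard symplectic form `ω(v,w) = Σᵢ ((v i)₁(w i)₂ − (v i)₂(w i)₁)`. -/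
noncomputable def omegaForm {n : ℕ} (v w : Fin n → ℂ × ℂ) : ℂ :=
  ∑ i, ((v i).1 * (w i).2 - (v i).2 * (w i).1)

/-!
The sign change `a = (1, …, -1, …, 1)` at the coordinate `i` fixes the summand `j ≠ i` of
`(ℂ×ℂ)ⁿ` and negates the summand `i`, so an invariant form pairs distinct summands trivially:
`B` is the sum of its restrictions to the summands `ℂ×ℂ`. An alternating form on `ℂ×ℂ` is a
multiple of the determinant, and the transpositions in `Sₙ` force all these multiples to agree.
-/

section Bilinear

variable {R M N : Type*} [CommRing R] [AddCommGroup M] [Module R M] [AddCommGroup N] [Module R N]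

theorem LinearMap.IsAlt.apply_smul_add_smul {B : M →ₗ[R] M →ₗ[R] N} (hB : B.IsAlt)
    (x y : M) (a b a' b' : R) :
    B (a • x + b • y) (a' • x + b' • y) = (a * b' - b * a') • B x y := by
  have hyx : B y x = -B x y := (hB.neg x y).symm
  simp only [map_add, map_smul, LinearMap.add_apply, LinearMap.smul_apply, hB.self_eq_zero, hyx]
  module

theorem LinearMap.apply_eq_sum_single_of_offDiag {ι : Type*} [Fintype ι] [DecidableEq ι]
    (B : (ι → M) →ₗ[R] (ι → M) →ₗ[R] N)
    (hB : ∀ i j p q, i ≠ j → B (Pi.single i p) (Pi.single j q) = 0) (v w : ι → M) :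
    B v w = ∑ i, B (Pi.single i (v i)) (Pi.single i (w i)) := by
  conv_lhs => rw [← Finset.univ_sum_single v, ← Finset.univ_sum_single w]
  simp only [map_sum, LinearMap.sum_apply]
  refine Finset.sum_congr rfl fun i _ => Finset.sum_eq_single i (fun j _ hji => ?_) (by simp)
  exact hB j i _ _ hji

end Bilinear

section Tmap

variable {n : ℕ} (B : (Fin n → ℂ × ℂ) →ₗ[ℂ] (Fin n → ℂ × ℂ) →ₗ[ℂ] ℂ)

theorem Tmap_single (a : Fin n → ℂˣ) (σ : Equiv.Perm (Fin n)) (j : Fin n) (p : ℂ × ℂ) :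
    Tmap a σ (Pi.single j p) = Pi.single (σ j) ((a j : ℂ) * p.1, ((a j)⁻¹ : ℂˣ) * p.2) := by
  funext k
  rcases eq_or_ne k (σ j) with rfl | hk
  · simp [Tmap]
  · have hk' : σ.symm k ≠ j := fun h => hk (by rw [← h, Equiv.apply_symm_apply])
    simp [Tmap, Pi.single_eq_of_ne hk, Pi.single_eq_of_ne hk']

theorem Tmap_mulSingle_neg_one_single (i j : Fin n) (p : ℂ × ℂ) :
    Tmap (Pi.mulSingle i (-1)) 1 (Pi.single j p) = Pi.single j (if j = i then -p else p) := by
  rw [Tmap_single, Equiv.Perm.one_apply]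
  rcases eq_or_ne j i with rfl | hji
  · simp [Prod.ext_iff]
  · simp [hji]

theorem apply_single_single_eq_zero_of_ne {i j : Fin n}
    (hB : ∀ v w, B (Tmap (Pi.mulSingle i (-1)) 1 v) (Tmap (Pi.mulSingle i (-1)) 1 w) = B v w)
    (hij : i ≠ j) (p q : ℂ × ℂ) : B (Pi.single i p) (Pi.single j q) = 0 := by
  have h := hB (Pi.single i p) (Pi.single j q)
  rw [Tmap_mulSingle_neg_one_single, Tmap_mulSingle_neg_one_single, if_pos rfl,
    if_neg hij.symm, Pi.single_neg, map_neg, LinearMap.neg_apply] at h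
  exact self_eq_neg.mp h.symm

theorem apply_single_single_swap {i j : Fin n}
    (hB : ∀ v w, B (Tmap 1 (Equiv.swap i j) v) (Tmap 1 (Equiv.swap i j) w) = B v w)
    (p q : ℂ × ℂ) : B (Pi.single j p) (Pi.single j q) = B (Pi.single i p) (Pi.single i q) := by
  simpa [Tmap_single] using hB (Pi.single i p) (Pi.single i q)

end Tmap

theorem stmt17_general {n : ℕ}
    (B : (Fin n → ℂ × ℂ) →ₗ[ℂ] (Fin n → ℂ × ℂ) →ₗ[ℂ] ℂ)
    (hBalt : ∀ v, B v v = 0)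
    (hBinv : ∀ a : Fin n → ℂˣ, (∀ i, a i = 1 ∨ a i = -1) →
      ∀ σ : Equiv.Perm (Fin n), ∀ v w, B (Tmap a σ v) (Tmap a σ w) = B v w) :
    ∃ c : ℂ, ∀ v w, B v w = c * omegaForm v w := by
  let e : Fin n → Fin n → ℂ × ℂ := fun i => Pi.single i (1, 0)
  let f : Fin n → Fin n → ℂ × ℂ := fun i => Pi.single i (0, 1)
  have hdiag (i : Fin n) (p q : ℂ × ℂ) :
      B (Pi.single i p) (Pi.single i q) = (p.1 * q.2 - p.2 * q.1) * B (e i) (f i) := by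
    have hsingle (r : ℂ × ℂ) : Pi.single i r = r.1 • e i + r.2 • f i := by
      simp [e, f, ← Pi.single_smul, ← Pi.single_add]
    rw [hsingle p, hsingle q]
    exact (LinearMap.IsAlt.apply_smul_add_smul hBalt _ _ _ _ _ _)
  obtain ⟨c, hc⟩ : ∃ c, ∀ i, B (e i) (f i) = c := by
    rcases isEmpty_or_nonempty (Fin n) with hempty | ⟨⟨i₀⟩⟩
    · exact ⟨0, hempty.elim⟩
    · exact ⟨_, fun i => apply_single_single_swap B
        (hBinv 1 (fun _ => Or.inl rfl) (Equiv.swap i₀ i)) _ _⟩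
  have hoffDiag (i j : Fin n) (p q : ℂ × ℂ) (hij : i ≠ j) :
      B (Pi.single i p) (Pi.single j q) = 0 := by
    refine apply_single_single_eq_zero_of_ne B (hBinv _ (fun k => ?_) 1) hij p q
    rcases eq_or_ne k i with rfl | hki
    · simp
    · simp [Pi.mulSingle_eq_of_ne hki]
  refine ⟨c, fun v w => ?_⟩
  rw [B.apply_eq_sum_single_of_offDiag hoffDiag, omegaForm, Finset.mul_sum]
  refine Finset.sum_congr rfl fun i _ => ?_
  rw [hdiag, hc, mul_comm]

theorem stmt17 {n : ℕ} (hn : 1 ≤ n)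
    (B : (Fin n → ℂ × ℂ) →ₗ[ℂ] (Fin n → ℂ × ℂ) →ₗ[ℂ] ℂ)
    (hBalt : ∀ v, B v v = 0)
    (hBinv : ∀ a : Fin n → ℂˣ, (∀ i, a i = 1 ∨ a i = -1) →
      ∀ σ : Equiv.Perm (Fin n), ∀ v w, B (Tmap a σ v) (Tmap a σ w) = B v w) :
    ∃ c : ℂ, ∀ v w, B v w = c * omegaForm v w :=
  stmt17_general B hBalt hBinv
end

section
/- Fix k ∈ {2, 3, 4, 6} and n ≥ 2, and let μ_k ⊆ ℂˣ be the group of k-th roots of unity. Let f : (ℂ×ℂ)^n → ℂ be a ℂ-linear functional such that f ∘ T_{a,σ} = f for every a : Fin n → μ_k with ∏_i a(i) = 1 and every even permutation σ of Fin n. Then f = 0. (This computes h^{1,0}(Z) = 0 for Z = E^{2n}/Γ′, where Γ′ = {(a₁,…,aₙ,τ) ∈ G^n ⋊ S_n : a₁⋯aₙ = 1, τ ∈ A_n} is Matsushita-type subgroup.) -/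
open scoped BigOperators

lemma Tmap_one_apply {n : ℕ} (a : Fin n → ℂˣ) (v : Fin n → ℂ × ℂ) (m : Fin n) :
    Tmap a 1 v m = ((a m : ℂ) * (v m).1, (((a m)⁻¹ : ℂˣ) : ℂ) * (v m).2) := by
  simp only [Tmap, inv_one, Equiv.Perm.one_apply]

theorem stmt18 (k : ℕ) (hk : k ∈ ({2, 3, 4, 6} : Set ℕ)) {n : ℕ} (hn : 2 ≤ n)
    (f : (Fin n → ℂ × ℂ) →ₗ[ℂ] ℂ)
    (hfinv : ∀ a : Fin n → ℂˣ, (∀ i, a i ^ k = 1) → (∏ i, a i) = 1 →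
      ∀ σ : Equiv.Perm (Fin n), Equiv.Perm.sign σ = 1 →
        ∀ v, f (Tmap a σ v) = f v) :
    f = 0 := by
  have hk2 : 2 ≤ k := by
    rcases hk with h | h | h | h <;> simp_all <;> omega
  have hk0 : k ≠ 0 := by omega
  -- get a k-th root of unity ζ ≠ 1 as a unit
  have hprim := Complex.isPrimitiveRoot_exp k hk0
  have hunit : IsUnit (Complex.exp (2 * Real.pi * Complex.I / k)) :=
    hprim.isUnit (by omega)
  obtain ⟨ζ, hζval⟩ := hunit
  have hζk : ζ ^ k = 1 := by
    ext
    push_cast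
    rw [hζval]
    exact hprim.pow_eq_one
  have hζ1 : (ζ : ℂ) ≠ 1 := by
    rw [hζval]
    exact hprim.ne_one (by omega)
  have hζinv1 : ((ζ⁻¹ : ℂˣ) : ℂ) ≠ 1 := by
    intro h
    apply hζ1
    have : (ζ⁻¹ : ℂˣ) = 1 := Units.ext (by simpa using h)
    have : ζ = 1 := by simpa using congrArg (·⁻¹) this
    simp [this]
  -- key invariance on single-supported vectors
  have main : ∀ (i : Fin n) (c d : ℂ),
      f (Pi.single i ((ζ : ℂ) * c, ((ζ⁻¹ : ℂˣ) : ℂ) * d)) = f (Pi.single i (c, d)) := by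
    intro i c d
    obtain ⟨j, hj⟩ : ∃ j : Fin n, j ≠ i := by
      have : Nontrivial (Fin n) := Fin.nontrivial_iff_two_le.mpr hn
      exact exists_ne i
    set a : Fin n → ℂˣ := Pi.mulSingle i ζ * Pi.mulSingle j ζ⁻¹ with ha
    have ha1 : ∀ m, a m ^ k = 1 := by
      intro m
      simp only [ha, Pi.mul_apply, Pi.mulSingle_apply, mul_pow]
      split_ifs <;> simp [hζk, inv_pow]
    have ha2 : ∏ m, a m = 1 := by
      simp only [ha, Pi.mul_apply, Finset.prod_mul_distrib, Finset.prod_pi_mulSingle]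
      simp
    have hT : Tmap a 1 (Pi.single i (c, d)) =
        Pi.single i ((ζ : ℂ) * c, ((ζ⁻¹ : ℂˣ) : ℂ) * d) := by
      funext m
      rw [Tmap_one_apply]
      by_cases hm : m = i
      · subst hm
        simp [ha, Pi.mulSingle_apply, Ne.symm hj]
      · simp [ha, Pi.single_eq_of_ne hm, Prod.ext_iff]
    have := hfinv a ha1 ha2 1 (by simp) (Pi.single i (c, d))
    rwa [hT] at this
  -- f vanishes on basis vectors
  have h1 : ∀ i : Fin n, f (Pi.single i ((1 : ℂ), (0 : ℂ))) = 0 := by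
    intro i
    have h := main i 1 0
    have hsm : (Pi.single i ((ζ : ℂ) * 1, ((ζ⁻¹ : ℂˣ) : ℂ) * 0) : Fin n → ℂ × ℂ)
        = (ζ : ℂ) • (Pi.single i ((1 : ℂ), (0 : ℂ)) : Fin n → ℂ × ℂ) := by
      rw [← Pi.single_smul]
      congr 1
      simp [Prod.smul_mk]
    rw [hsm, map_smul, smul_eq_mul] at h
    have h' : ((ζ : ℂ) - 1) * f (Pi.single i ((1 : ℂ), (0 : ℂ))) = 0 := by
      linear_combination h
    rcases mul_eq_zero.mp h' with h'' | h''
    · exact absurd (sub_eq_zero.mp h'') hζ1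
    · exact h''
  have h2 : ∀ i : Fin n, f (Pi.single i ((0 : ℂ), (1 : ℂ))) = 0 := by
    intro i
    have h := main i 0 1
    have hsm : (Pi.single i ((ζ : ℂ) * 0, ((ζ⁻¹ : ℂˣ) : ℂ) * 1) : Fin n → ℂ × ℂ)
        = ((ζ⁻¹ : ℂˣ) : ℂ) • (Pi.single i ((0 : ℂ), (1 : ℂ)) : Fin n → ℂ × ℂ) := by
      rw [← Pi.single_smul]
      congr 1
      simp [Prod.smul_mk]
    rw [hsm, map_smul, smul_eq_mul] at h
    have h' : (((ζ⁻¹ : ℂˣ) : ℂ) - 1) * f (Pi.single i ((0 : ℂ), (1 : ℂ))) = 0 := by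
      linear_combination h
    rcases mul_eq_zero.mp h' with h'' | h''
    · exact absurd (sub_eq_zero.mp h'') hζinv1
    · exact h''
  -- conclude
  apply LinearMap.ext
  intro v
  have hv : v = ∑ i, Pi.single i (v i) := (Finset.univ_sum_single v).symm
  rw [LinearMap.zero_apply, hv, map_sum]
  refine Finset.sum_eq_zero fun i _ => ?_
  have hvi : (Pi.single i (v i) : Fin n → ℂ × ℂ)
      = (v i).1 • (Pi.single i ((1 : ℂ), (0 : ℂ)) : Fin n → ℂ × ℂ)
        + (v i).2 • (Pi.single i ((0 : ℂ), (1 : ℂ)) : Fin n → ℂ × ℂ) := by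
    rw [← Pi.single_smul, ← Pi.single_smul, ← Pi.single_add]
    congr 1
    simp [Prod.ext_iff]
  rw [hvi, map_add, map_smul, map_smul, h1, h2]
  simp
end
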